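/- Let N ∈ {2,3}, α = 4 − N, m₁, m₂ > 0, and ω ∈ ℝ with ω² < min{m₁², m₂²/4}. If 𝐮 is an admissible pair with P_ω(𝐮) < 0, then L(𝐮) > 0, M_ω(𝐮) > 0, and the number λ₀ = (α·M_ω(𝐮)/((α+2)·L(𝐮)))^{1/2} satisfies λ₀ ∈ (0,1) and P_ω(𝐮^{λ₀}) = 0. -/

import Mathlib

open MeasureTheory Complex

noncomputable section

/-- The spatial domain `ℝ^N`. -/
abbrev Sp (N : ℕ) := EuclideanSpace ℝ (Fin N)

/-- Square of the `L²` norm: `‖u‖_{L²}²`. -/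
def nsq {N : ℕ} (u : Sp N → ℂ) : ℝ := ∫ x, ‖u x‖ ^ 2

/-- Square of the `L²` norm of the gradient: `‖∇u‖_{L²}²`. -/
def gsq {N : ℕ} (u : Sp N → ℂ) : ℝ := ∫ x, ‖fderiv ℝ u x‖ ^ 2

/-- An admissible pair: differentiable components, with `u_j`, `|∇u_j|`
square-integrable and `|u₁|²|u₂|` integrable. -/
def Admissible {N : ℕ} (u : (Sp N → ℂ) × (Sp N → ℂ)) : Prop :=
  Differentiable ℝ u.1 ∧ Differentiable ℝ u.2 ∧
  MemLp u.1 2 volume ∧ MemLp u.2 2 volume ∧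
  Integrable (fun x => ‖fderiv ℝ u.1 x‖ ^ 2) ∧
  Integrable (fun x => ‖fderiv ℝ u.2 x‖ ^ 2) ∧
  Integrable (fun x => ‖u.1 x‖ ^ 2 * ‖u.2 x‖)

/-- A pair of square-integrable functions. -/
def SqInt {N : ℕ} (v : (Sp N → ℂ) × (Sp N → ℂ)) : Prop :=
  MemLp v.1 2 volume ∧ MemLp v.2 2 volume

/-- The interaction term `G(𝐮) = Re ∫ u₁² conj u₂`. -/
def Gfun {N : ℕ} (u : (Sp N → ℂ) × (Sp N → ℂ)) : ℝ :=
  (∫ x, (u.1 x) ^ 2 * starRingEnd ℂ (u.2 x)).re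

/-- `L(𝐮) = -(1/2)(‖∇u₁‖² + ‖∇u₂‖²) + G(𝐮)`. -/
def Lfun {N : ℕ} (u : (Sp N → ℂ) × (Sp N → ℂ)) : ℝ :=
  -(1/2) * (gsq u.1 + gsq u.2) + Gfun u

/-- `M(𝐮) = (1/2)(m₁²‖u₁‖² + m₂²‖u₂‖²)`. -/
def Mfun {N : ℕ} (m₁ m₂ : ℝ) (u : (Sp N → ℂ) × (Sp N → ℂ)) : ℝ :=
  (1/2) * (m₁ ^ 2 * nsq u.1 + m₂ ^ 2 * nsq u.2)

/-- `M_ω(𝐮) = ((m₁²-ω²)/2)‖u₁‖² + ((m₂²-4ω²)/2)‖u₂‖²`. -/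
def Mom {N : ℕ} (m₁ m₂ ω : ℝ) (u : (Sp N → ℂ) × (Sp N → ℂ)) : ℝ :=
  (m₁ ^ 2 - ω ^ 2) / 2 * nsq u.1 + (m₂ ^ 2 - 4 * ω ^ 2) / 2 * nsq u.2

/-- `J_ω(𝐮) = M_ω(𝐮) - L(𝐮)`. -/
def Jom {N : ℕ} (m₁ m₂ ω : ℝ) (u : (Sp N → ℂ) × (Sp N → ℂ)) : ℝ :=
  Mom m₁ m₂ ω u - Lfun u

/-- The Nehari functional `K_ω(𝐮)`. -/
def Kom {N : ℕ} (m₁ m₂ ω : ℝ) (u : (Sp N → ℂ) × (Sp N → ℂ)) : ℝ :=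
  2 * Mom m₁ m₂ ω u + gsq u.1 + gsq u.2 - 3 * Gfun u

/-- `P_ω(𝐮) = α M_ω(𝐮) - (α+2) L(𝐮)` with `α = 4 - N`. -/
def Pom {N : ℕ} (m₁ m₂ ω : ℝ) (u : (Sp N → ℂ) × (Sp N → ℂ)) : ℝ :=
  (4 - (N : ℝ)) * Mom m₁ m₂ ω u - ((4 - (N : ℝ)) + 2) * Lfun u

/-- `K(𝐯) = (1/2)(‖v₁‖² + ‖v₂‖²)`. -/
def Kfun {N : ℕ} (v : (Sp N → ℂ) × (Sp N → ℂ)) : ℝ :=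
  (1/2) * (nsq v.1 + nsq v.2)

/-- The energy `E(𝐮,𝐯) = K(𝐯) + M(𝐮) - L(𝐮)`. -/
def Efun {N : ℕ} (m₁ m₂ : ℝ) (u v : (Sp N → ℂ) × (Sp N → ℂ)) : ℝ :=
  Kfun v + Mfun m₁ m₂ u - Lfun u

/-- The charge `Q(𝐮,𝐯) = (v₁, i u₁)_{L²} + 2 (v₂, i u₂)_{L²}`. -/
def Qfun {N : ℕ} (u v : (Sp N → ℂ) × (Sp N → ℂ)) : ℝ :=
  (∫ x, v.1 x * starRingEnd ℂ (Complex.I * u.1 x)).re +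
    2 * (∫ x, v.2 x * starRingEnd ℂ (Complex.I * u.2 x)).re

/-- `H(𝐮,𝐯) = -α K(𝐯) + α M(𝐮) - (α+2) L(𝐮)` with `α = 4 - N`. -/
def Hfun {N : ℕ} (m₁ m₂ : ℝ) (u v : (Sp N → ℂ) × (Sp N → ℂ)) : ℝ :=
  -(4 - (N : ℝ)) * Kfun v + (4 - (N : ℝ)) * Mfun m₁ m₂ u - ((4 - (N : ℝ)) + 2) * Lfun u

/-- A ground-state pair: admissible, nonzero, `P_ω = 0`, and `J_ω` attains the
infimum of `J_ω` over nonzero admissible pairs on the Nehari manifold `K_ω = 0`. -/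
def IsGroundState {N : ℕ} (m₁ m₂ ω : ℝ) (φ : (Sp N → ℂ) × (Sp N → ℂ)) : Prop :=
  Admissible φ ∧ φ ≠ 0 ∧ Pom m₁ m₂ ω φ = 0 ∧
  Jom m₁ m₂ ω φ =
    sInf {r : ℝ | ∃ w : (Sp N → ℂ) × (Sp N → ℂ),
      Admissible w ∧ w ≠ 0 ∧ Kom m₁ m₂ ω w = 0 ∧ r = Jom m₁ m₂ ω w}

/-- `𝛙_ω = (iωφ₁, 2iωφ₂)`. -/
def psiOf {N : ℕ} (ω : ℝ) (φ : (Sp N → ℂ) × (Sp N → ℂ)) : (Sp N → ℂ) × (Sp N → ℂ) :=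
  (fun x => Complex.I * (ω : ℂ) * φ.1 x, fun x => 2 * (Complex.I * (ω : ℂ)) * φ.2 x)

/-- The scaling `u^λ(x) = λ² u(λx)`, componentwise. -/
def uscale {N : ℕ} (lam : ℝ) (u : (Sp N → ℂ) × (Sp N → ℂ)) : (Sp N → ℂ) × (Sp N → ℂ) :=
  (fun x => ((lam : ℂ)) ^ 2 * u.1 (lam • x), fun x => ((lam : ℂ)) ^ 2 * u.2 (lam • x))

/-- The scaling `v_λ(x) = λ^{N-2} v(λx)`, componentwise. -/
def vscale {N : ℕ} (lam : ℝ) (v : (Sp N → ℂ) × (Sp N → ℂ)) : (Sp N → ℂ) × (Sp N → ℂ) :=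
  (fun x => ((lam ^ ((N : ℝ) - 2) : ℝ) : ℂ) * v.1 (lam • x),
   fun x => ((lam ^ ((N : ℝ) - 2) : ℝ) : ℂ) * v.2 (lam • x))


section Aux

variable {N : ℕ}

lemma comp_smul_int {F : Type*} [NormedAddCommGroup F] [NormedSpace ℝ F] (lam : ℝ)
    (f : Sp N → F) :
    ∫ x : Sp N, f (lam • x) = |(lam ^ N)⁻¹| • ∫ x, f x := by
  have h := MeasureTheory.Measure.integral_comp_smul (volume : Measure (Sp N)) f lam
  simpa [finrank_euclideanSpace_fin] using h

lemma nsq_scale (lam : ℝ) (hlam : 0 < lam) (u : Sp N → ℂ) :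
    nsq (fun x => ((lam : ℂ)) ^ 2 * u (lam • x)) = lam ^ 4 * (lam ^ N)⁻¹ * nsq u := by
  unfold nsq
  have h1 : ∀ x : Sp N, ‖((lam : ℂ)) ^ 2 * u (lam • x)‖ ^ 2
      = lam ^ 4 * ‖u (lam • x)‖ ^ 2 := by
    intro x
    rw [norm_mul, norm_pow, Complex.norm_real, Real.norm_eq_abs, abs_of_pos hlam]
    ring
  simp_rw [h1]
  rw [MeasureTheory.integral_const_mul _ _, comp_smul_int lam (fun y => ‖u y‖ ^ 2),
    abs_of_pos (by positivity), smul_eq_mul]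
  ring

lemma fderiv_scale (lam : ℝ) (u : Sp N → ℂ) (hu : Differentiable ℝ u) (x : Sp N) :
    fderiv ℝ (fun y => ((lam : ℂ)) ^ 2 * u (lam • y)) x
      = ((lam : ℂ)) ^ 2 • (lam • fderiv ℝ u (lam • x)) := by
  have hsm : HasFDerivAt (fun y : Sp N => lam • y)
      (lam • ContinuousLinearMap.id ℝ (Sp N)) x := by
    exact (hasFDerivAt_id x).const_smul lam
  have h1 : HasFDerivAt (fun y : Sp N => u (lam • y))
      ((fderiv ℝ u (lam • x)).comp (lam • ContinuousLinearMap.id ℝ (Sp N))) x :=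
    (hu (lam • x)).hasFDerivAt.comp x hsm
  have h2 : (fderiv ℝ u (lam • x)).comp (lam • ContinuousLinearMap.id ℝ (Sp N))
      = lam • fderiv ℝ u (lam • x) := by
    ext y; simp
  rw [h2] at h1
  exact (h1.const_mul _).fderiv

lemma gsq_scale (lam : ℝ) (hlam : 0 < lam) (u : Sp N → ℂ) (hu : Differentiable ℝ u) :
    gsq (fun x => ((lam : ℂ)) ^ 2 * u (lam • x)) = lam ^ 6 * (lam ^ N)⁻¹ * gsq u := by
  unfold gsq
  have h1 : ∀ x : Sp N, ‖fderiv ℝ (fun y => ((lam : ℂ)) ^ 2 * u (lam • y)) x‖ ^ 2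
      = lam ^ 6 * ‖fderiv ℝ u (lam • x)‖ ^ 2 := by
    intro x
    rw [fderiv_scale lam u hu x,
      norm_smul ((lam : ℂ) ^ 2) (lam • fderiv ℝ u (lam • x)),
      norm_smul lam (fderiv ℝ u (lam • x))]
    rw [Real.norm_eq_abs, abs_of_pos hlam]
    have : ‖((lam : ℂ)) ^ 2‖ = lam ^ 2 := by
      rw [norm_pow, Complex.norm_real, Real.norm_eq_abs, abs_of_pos hlam]
    rw [this]; ring
  simp_rw [h1]
  rw [MeasureTheory.integral_const_mul _ _,
    comp_smul_int lam (fun y => ‖fderiv ℝ u y‖ ^ 2), abs_of_pos (by positivity), smul_eq_mul]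
  ring

lemma Gfun_scale (lam : ℝ) (hlam : 0 < lam) (u : (Sp N → ℂ) × (Sp N → ℂ)) :
    Gfun (uscale lam u) = lam ^ 6 * (lam ^ N)⁻¹ * Gfun u := by
  unfold Gfun uscale
  have h1 : ∀ x : Sp N,
      (((lam : ℂ)) ^ 2 * u.1 (lam • x)) ^ 2 * starRingEnd ℂ (((lam : ℂ)) ^ 2 * u.2 (lam • x))
      = ((lam : ℂ)) ^ 6 * ((u.1 (lam • x)) ^ 2 * starRingEnd ℂ (u.2 (lam • x))) := by
    intro x
    rw [map_mul]
    have : starRingEnd ℂ (((lam : ℂ)) ^ 2) = ((lam : ℂ)) ^ 2 := by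
      rw [map_pow, Complex.conj_ofReal]
    rw [this]; ring
  simp_rw [h1]
  rw [MeasureTheory.integral_const_mul _ _,
    comp_smul_int lam (fun y => (u.1 y) ^ 2 * starRingEnd ℂ (u.2 y)),
    abs_of_pos (by positivity),
    show ((lam : ℂ)) ^ 6 = (((lam ^ 6 : ℝ)) : ℂ) by push_cast; ring,
    Complex.re_ofReal_mul, Complex.smul_re, smul_eq_mul]
  ring

lemma Mom_scale (m₁ m₂ ω lam : ℝ) (hlam : 0 < lam) (u : (Sp N → ℂ) × (Sp N → ℂ)) :
    Mom m₁ m₂ ω (uscale lam u) = lam ^ 4 * (lam ^ N)⁻¹ * Mom m₁ m₂ ω u := by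
  unfold Mom uscale
  rw [nsq_scale lam hlam u.1, nsq_scale lam hlam u.2]
  ring

lemma Lfun_scale (lam : ℝ) (hlam : 0 < lam) (u : (Sp N → ℂ) × (Sp N → ℂ))
    (h1 : Differentiable ℝ u.1) (h2 : Differentiable ℝ u.2) :
    Lfun (uscale lam u) = lam ^ 6 * (lam ^ N)⁻¹ * Lfun u := by
  unfold Lfun
  rw [Gfun_scale lam hlam u]
  show -(1/2) * (gsq (fun x => ((lam:ℂ))^2 * u.1 (lam • x)) + gsq (fun x => ((lam:ℂ))^2 * u.2 (lam • x))) + _ = _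
  rw [gsq_scale lam hlam u.1 h1, gsq_scale lam hlam u.2 h2]
  ring

end Aux

/-- If `P_ω(𝐮) < 0`, then `L(𝐮) > 0`, `M_ω(𝐮) > 0`, and
`λ₀ = (α M_ω(𝐮)/((α+2) L(𝐮)))^{1/2}` satisfies `λ₀ ∈ (0,1)` and
`P_ω(𝐮^{λ₀}) = 0`. -/
theorem stmt_10 {N : ℕ} (hN : N = 2 ∨ N = 3) (m₁ m₂ ω : ℝ)
    (hm₁ : 0 < m₁) (hm₂ : 0 < m₂) (hω : ω ^ 2 < min (m₁ ^ 2) (m₂ ^ 2 / 4))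
    (u : (Sp N → ℂ) × (Sp N → ℂ)) (hu : Admissible u)
    (hP : Pom m₁ m₂ ω u < 0) :
    0 < Lfun u ∧ 0 < Mom m₁ m₂ ω u ∧
    Real.sqrt ((4 - (N : ℝ)) * Mom m₁ m₂ ω u / (((4 - (N : ℝ)) + 2) * Lfun u))
      ∈ Set.Ioo (0 : ℝ) 1 ∧
    Pom m₁ m₂ ω
      (uscale (Real.sqrt ((4 - (N : ℝ)) * Mom m₁ m₂ ω u / (((4 - (N : ℝ)) + 2) * Lfun u))) u)
      = 0 := by
  obtain ⟨hd1, hd2, hL2a, hL2b, hg1, hg2, hG12⟩ := hu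
  have hαpos : (0 : ℝ) < 4 - (N : ℝ) := by
    rcases hN with h | h <;> rw [h] <;> norm_num
  have hα2 : (0 : ℝ) < (4 - (N : ℝ)) + 2 := by linarith
  have hn1 : 0 ≤ nsq u.1 := MeasureTheory.integral_nonneg fun x => by positivity
  have hn2 : 0 ≤ nsq u.2 := MeasureTheory.integral_nonneg fun x => by positivity
  have hc1 : 0 < m₁ ^ 2 - ω ^ 2 := by
    have := (lt_min_iff.mp hω).1; linarith
  have hc2 : 0 < m₂ ^ 2 - 4 * ω ^ 2 := by
    have := (lt_min_iff.mp hω).2; linarith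
  have hM0 : 0 ≤ Mom m₁ m₂ ω u := by
    unfold Mom
    have := mul_nonneg hc1.le hn1
    have := mul_nonneg hc2.le hn2
    nlinarith
  have hL : 0 < Lfun u := by
    unfold Pom at hP
    nlinarith [mul_nonneg hαpos.le hM0]
  have hM : 0 < Mom m₁ m₂ ω u := by
    rcases hM0.lt_or_eq with h | h
    · exact h
    exfalso
    have hn1z : nsq u.1 = 0 := by
      unfold Mom at h
      nlinarith [mul_nonneg hc1.le hn1, mul_nonneg hc2.le hn2]
    have hint : MeasureTheory.Integrable (fun x => ‖u.1 x‖ ^ 2) :=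
      (MeasureTheory.memLp_two_iff_integrable_sq_norm
        hd1.continuous.aestronglyMeasurable).mp hL2a
    have hz : (fun x => ‖u.1 x‖ ^ 2) =ᵐ[volume] 0 := by
      rw [← MeasureTheory.integral_eq_zero_iff_of_nonneg (fun x => by positivity) hint]
      exact hn1z
    have hz2 : (fun x => (u.1 x) ^ 2 * starRingEnd ℂ (u.2 x)) =ᵐ[volume] 0 := by
      filter_upwards [hz] with x hx
      have hx0 : u.1 x = 0 := by
        have : ‖u.1 x‖ = 0 := by
          have := hx
          simp only [Pi.zero_apply] at this
          nlinarith [norm_nonneg (u.1 x)]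
        simpa using this
      simp [hx0]
    have hG0 : Gfun u = 0 := by
      unfold Gfun
      rw [MeasureTheory.integral_congr_ae hz2]
      simp
    have hgs1 : 0 ≤ gsq u.1 := MeasureTheory.integral_nonneg fun x => by positivity
    have hgs2 : 0 ≤ gsq u.2 := MeasureTheory.integral_nonneg fun x => by positivity
    have : Lfun u ≤ 0 := by
      unfold Lfun; rw [hG0]; nlinarith
    linarith
  set r : ℝ := (4 - (N : ℝ)) * Mom m₁ m₂ ω u / (((4 - (N : ℝ)) + 2) * Lfun u) with hr
  have hrpos : 0 < r := by
    apply div_pos (by positivity) (by positivity)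
  have hr1 : r < 1 := by
    rw [hr, div_lt_one (by positivity)]
    unfold Pom at hP
    linarith
  set lam0 : ℝ := Real.sqrt r with hlam0
  have hlampos : 0 < lam0 := Real.sqrt_pos.mpr hrpos
  have hlamsq : lam0 ^ 2 = r := Real.sq_sqrt hrpos.le
  have hlam1 : lam0 < 1 := by
    rw [hlam0, show (1 : ℝ) = Real.sqrt 1 by simp]
    exact Real.sqrt_lt_sqrt hrpos.le hr1
  refine ⟨hL, hM, ⟨hlampos, hlam1⟩, ?_⟩
  have key : lam0 ^ 2 * (((4 - (N : ℝ)) + 2) * Lfun u) = (4 - (N : ℝ)) * Mom m₁ m₂ ω u := by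
    rw [hlamsq, hr]
    field_simp
  unfold Pom
  rw [Mom_scale m₁ m₂ ω lam0 hlampos u, Lfun_scale lam0 hlampos u hd1 hd2]
  linear_combination (-(lam0 ^ 4 * ((lam0 : ℝ) ^ N)⁻¹)) * key

end
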